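/- Each of the eight lines ℓₖ and ℓ'ₖ (k = 0,…,3) has positive linking number with the z-axis: concretely, along each line oriented so that dz > 0, the winding of the (x,y)-projection around the origin is monotone increasing, i.e., x·dy/dt − y·dx/dt > 0 at every parameter t. -/
import Mathlib


def Rot (v : ℝ × ℝ × ℝ) : ℝ × ℝ × ℝ := (-v.2.1, v.1, v.2.2)
def P0 : ℝ × ℝ × ℝ := (3, -1, -1)
def Q0 : ℝ × ℝ × ℝ := (3, 1, 1)
def Ppt (k : ℕ) : ℝ × ℝ × ℝ := Rot^[k] P0
def Qpt (k : ℕ) : ℝ × ℝ × ℝ := Rot^[k] Q0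

/-- Affine parametrization a + t(b - a) of the line through a and b. -/
noncomputable def par (a b : ℝ × ℝ × ℝ) (t : ℝ) : ℝ × ℝ × ℝ := a + t • (b - a)

lemma key (a b : ℝ × ℝ × ℝ) (hz : a.2.2 < b.2.2)
    (hw : 0 < a.1 * (b - a).2.1 - a.2.1 * (b - a).1) :
    StrictMono (fun t : ℝ => (par a b t).2.2) ∧
      ∀ t : ℝ, (par a b t).1 * (b - a).2.1 - (par a b t).2.1 * (b - a).1 > 0 := by
  constructor
  · intro s t hst
    simp only [par, Prod.snd_add, Prod.snd_sub, Prod.smul_snd, smul_eq_mul]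
    nlinarith
  · intro t
    simp only [par, Prod.fst_add, Prod.fst_sub, Prod.smul_fst, Prod.snd_add,
      Prod.snd_sub, Prod.smul_snd, smul_eq_mul] at hw ⊢
    nlinarith [hw]

/-- Along each of the eight lines, oriented so that z is strictly increasing,
the winding quantity x·y' − y·x' is everywhere positive. -/
theorem positive_winding_of_eight_lines :
    ∀ k : Fin 4,
      (StrictMono (fun t : ℝ => (par (Ppt k) (Qpt k) t).2.2) ∧
        ∀ t : ℝ,
          (par (Ppt k) (Qpt k) t).1 * ((Qpt k) - (Ppt k)).2.1 -
            (par (Ppt k) (Qpt k) t).2.1 * ((Qpt k) - (Ppt k)).1 > 0) ∧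
      (StrictMono (fun t : ℝ => (par (Ppt k) (Qpt ((k + 1) % 4)) t).2.2) ∧
        ∀ t : ℝ,
          (par (Ppt k) (Qpt ((k + 1) % 4)) t).1 * ((Qpt ((k + 1) % 4)) - (Ppt k)).2.1 -
            (par (Ppt k) (Qpt ((k + 1) % 4)) t).2.1 * ((Qpt ((k + 1) % 4)) - (Ppt k)).1 > 0) := by
  intro k
  fin_cases k <;>
  · constructor <;>
    · apply key <;>
      · norm_num [Ppt, Qpt, Rot, P0, Q0, Function.iterate_succ, Prod.sub_def]
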